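/- arXiv:2003.05013 — 4 statements merged into one kernel-verified Lean document; each statement's English description precedes it below -/
import Mathlib

section
/- In the two-cutters-and-fugitive-ship game, if t_{f1}(λ₁) ≤ t_{f2}(λ₁) — i.e., when the evader runs directly away from pursuer 1 (heading φ = λ₁), pursuer 1's optimal capture time does not exceed pursuer 2's — then the value of the two-pursuer game equals the value of the 1v1 game against pursuer 1 alone, namely r₁₀/(β₁−1). -/
/-!
Running straight away from `P₁` (`φ = λ₁`, where `cos (φ - λ₁) = 1`) maximises `t_{f1}`, and
there `P₂` is no quicker by hypothesis; since `min (t_{f1}, t_{f2}) ≤ t_{f1}`, this heading is optimal.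
-/

open Real

lemma mul_cos_add_sqrt_le {c : ℝ} (hc : 0 ≤ c) (r θ : ℝ) :
    c * cos θ + √(c ^ 2 * cos θ ^ 2 + c * r) ≤ c + √(c ^ 2 + c * r) := by
  have hcos_sq : cos θ ^ 2 ≤ 1 := cos_sq_le_one θ
  gcongr
  · exact mul_le_of_le_one_right hc (cos_le_one θ)
  · nlinarith

/-- With `c = r / (β² - 1)` one has `c² + c r = (r β / (β² - 1))²`. -/
lemma add_sqrt_eq_div_sub_one {β r : ℝ} (hβ : 1 < β) (hr : 0 ≤ r) :
    r / (β ^ 2 - 1) + √((r / (β ^ 2 - 1)) ^ 2 + r / (β ^ 2 - 1) * r) = r / (β - 1) := by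
  have hβ_sq : 0 < β ^ 2 - 1 := by nlinarith
  have hβ_sub : β - 1 ≠ 0 := by linarith
  have hsq : (r / (β ^ 2 - 1)) ^ 2 + r / (β ^ 2 - 1) * r = (r * β / (β ^ 2 - 1)) ^ 2 := by
    field_simp
    ring
  rw [hsq, sqrt_sq (by positivity)]
  field_simp
  ring

theorem stmt5_general (β₁ r₁ lam₁ : ℝ) (hβ₁ : 1 < β₁)
    (hr₁ : 0 < r₁)
    (c₁ : ℝ) (hc₁ : c₁ = r₁/(β₁^2-1))
    (tf₁ tf₂ : ℝ → ℝ)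
    (htf₁ : ∀ φ, tf₁ φ = c₁ * Real.cos (φ - lam₁)
        + Real.sqrt (c₁^2 * Real.cos (φ - lam₁)^2 + c₁ * r₁))
    (hcase : tf₁ lam₁ ≤ tf₂ lam₁) :
    IsGreatest (Set.range fun φ => min (tf₁ φ) (tf₂ φ)) (r₁ / (β₁ - 1)) := by
  have hc₁_nonneg : 0 ≤ c₁ := by rw [hc₁]; exact div_nonneg hr₁.le (by nlinarith)
  have hval : tf₁ lam₁ = r₁ / (β₁ - 1) := by
    rw [htf₁, sub_self, cos_zero, mul_one, one_pow, mul_one, hc₁]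
    exact add_sqrt_eq_div_sub_one hβ₁ hr₁.le
  refine ⟨⟨lam₁, by rw [← hval]; exact min_eq_left hcase⟩, ?_⟩
  rintro _ ⟨φ, rfl⟩
  calc min (tf₁ φ) (tf₂ φ) ≤ tf₁ φ := min_le_left _ _
    _ ≤ tf₁ lam₁ := by
      rw [htf₁ φ, htf₁ lam₁, sub_self, cos_zero, mul_one, one_pow, mul_one]
      exact mul_cos_add_sqrt_le hc₁_nonneg r₁ _
    _ = r₁ / (β₁ - 1) := hval

/-- if t_{f1}(λ₁) ≤ t_{f2}(λ₁), the value of the two-cutters game —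
the greatest over evader headings φ of the first capture time min(t_{f1}(φ), t_{f2}(φ)) —
equals the 1v1 value against pursuer 1 alone, namely r₁/(β₁−1). -/
theorem stmt5 (β₁ β₂ r₁ r₂ lam₁ lam₂ : ℝ) (hβ₁ : 1 < β₁) (hβ₂ : 1 < β₂)
    (hr₁ : 0 < r₁) (hr₂ : 0 < r₂)
    (c₁ c₂ : ℝ) (hc₁ : c₁ = r₁/(β₁^2-1)) (hc₂ : c₂ = r₂/(β₂^2-1))
    (tf₁ tf₂ : ℝ → ℝ)
    (htf₁ : ∀ φ, tf₁ φ = c₁ * Real.cos (φ - lam₁)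
        + Real.sqrt (c₁^2 * Real.cos (φ - lam₁)^2 + c₁ * r₁))
    (htf₂ : ∀ φ, tf₂ φ = c₂ * Real.cos (φ - lam₂)
        + Real.sqrt (c₂^2 * Real.cos (φ - lam₂)^2 + c₂ * r₂))
    (hcase : tf₁ lam₁ ≤ tf₂ lam₁) :
    IsGreatest (Set.range fun φ => min (tf₁ φ) (tf₂ φ)) (r₁ / (β₁ - 1)) :=
  stmt5_general β₁ r₁ lam₁ hβ₁ hr₁ c₁ hc₁ tf₁ tf₂ htf₁ hcase
end

section
/- Define V(x) = dist(E,P₁)/(β₁−1) on ℝ² × ℝ² (as a function of E and P₁ positions, P₁ ≠ E) and the vector field f corresponding to evader heading φ* = λ₁ at unit speed and pursuer heading ψ₁* = λ₁ at speed β₁. Then the directional derivative satisfies ∇V · f = −1, so 1 + ∇V·f = 0 (the HJI equation holds in region R₁). -/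
/-! Along the optimal flow both players move on the line of sight in the direction `u` from `P₁`
to `E`, so `E - P₁` stays a positive multiple of `u` and the distance shrinks at the constant
rate `β₁ - 1`; dividing by `β₁ - 1` gives `dV/dt = -1`. -/

section RayNorm

variable {F : Type*} [NormedAddCommGroup F] [NormedSpace ℝ F]

lemma norm_add_smul_normalize {v : F} (hv : v ≠ 0) (s : ℝ) :
    ‖v + s • ‖v‖⁻¹ • v‖ = |‖v‖ + s| := by
  have hr : ‖v‖ ≠ 0 := norm_ne_zero_iff.2 hv
  have hsplit : v + s • ‖v‖⁻¹ • v = ((‖v‖ + s) * ‖v‖⁻¹) • v := by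
    rw [add_mul, mul_inv_cancel₀ hr, add_smul, one_smul, smul_smul]
  rw [hsplit, norm_smul, Real.norm_eq_abs, abs_mul, abs_inv, abs_norm, mul_assoc,
    inv_mul_cancel₀ hr, mul_one]

lemma hasDerivAt_norm_add_mul_smul_normalize {v : F} (hv : v ≠ 0) (c : ℝ) :
    HasDerivAt (fun t : ℝ => ‖v + (t * c) • ‖v‖⁻¹ • v‖) c 0 := by
  simp only [norm_add_smul_normalize hv]
  have hlin : HasDerivAt (fun t : ℝ => ‖v‖ + t * c) c 0 := by
    simpa using ((hasDerivAt_id (0 : ℝ)).mul_const c).const_add ‖v‖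
  have habs := (hasDerivAt_abs_pos (by simpa using hv)).comp (0 : ℝ) hlin
  rwa [one_mul] at habs

end RayNorm

/-- along the optimal flow in region R₁ (evader heading λ₁ at unit speed,
pursuer 1 heading λ₁ at speed β₁), the Value V = dist(E,P₁)/(β₁−1) has total time
derivative ∇V·f = −1, hence 1 + ∇V·f = 0 (the HJI equation holds). -/
theorem stmt9 (E P : EuclideanSpace ℝ (Fin 2)) (β : ℝ) (hβ : 1 < β) (hne : E ≠ P)
    (u : EuclideanSpace ℝ (Fin 2)) (hu : u = ‖E - P‖⁻¹ • (E - P)) :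
    HasDerivAt (fun t : ℝ => dist (E + t • u) (P + (β * t) • u) / (β - 1)) (-1) 0
      ∧ (1 : ℝ) + (-1) = 0 := by
  refine ⟨?_, by norm_num⟩
  have hrate : (1 - β) / (β - 1) = -1 := by
    rw [div_eq_iff (by linarith)]; ring
  have hV := (hasDerivAt_norm_add_mul_smul_normalize (sub_ne_zero.2 hne) (1 - β)).div_const
    (β - 1)
  rw [hrate, ← hu] at hV
  refine hV.congr_of_eventuallyEq (Filter.Eventually.of_forall fun t => ?_)
  dsimp only
  rw [dist_eq_norm]
  congr 2
  module
end

section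
/- With A = (x_A,0), D = (−x_A,0), x_A > 0, and target T = (x_T,y_T) with x_T > 0, y_T ≥ 0: the condition x_A² + y_T²/(1−α²) − x_T²/α² < 0 (the attacker-win region R_c) implies (sqrt((x_A+x_T)²+y_T²) − sqrt((x_A−x_T)²+y_T²))/(2x_A) > α, for α ∈ (0,1). -/
/-!
Multiplying the defining inequality of `R_c` by `α² (1 - α²) > 0` turns it into the polynomial
inequality `α² (1 - α²) x_A² + α² y_T² < (1 - α²) x_T²`. Write `R₁, R₂` for the distances from `T`
to `D` and to `A`. Since `R₁² - R₂² = 4 x_A x_T`, the claim `R₁ - R₂ > 2 α x_A` is equivalent to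
`α R₂ < x_T - α² x_A`, and squaring this last inequality gives exactly the polynomial one.
-/

open Real

lemma attackerWinRegion_poly {α xA xT yT : ℝ} (hα₀ : 0 < α) (hα₁ : α < 1)
    (h : xA ^ 2 + yT ^ 2 / (1 - α ^ 2) - xT ^ 2 / α ^ 2 < 0) :
    α ^ 2 * (1 - α ^ 2) * xA ^ 2 + α ^ 2 * yT ^ 2 < (1 - α ^ 2) * xT ^ 2 := by
  have hα₂ : 0 < 1 - α ^ 2 := by nlinarith
  have key := mul_lt_mul_of_pos_left h (mul_pos (pow_pos hα₀ 2) hα₂)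
  field_simp at key
  linarith

lemma mul_sqrt_lt_of_attackerWinRegion_poly {α xA xT yT : ℝ} (hα₀ : 0 < α) (hα₁ : α < 1)
    (hxA : 0 < xA) (hxT : 0 < xT)
    (h : α ^ 2 * (1 - α ^ 2) * xA ^ 2 + α ^ 2 * yT ^ 2 < (1 - α ^ 2) * xT ^ 2) :
    α * √((xA - xT) ^ 2 + yT ^ 2) < xT - α ^ 2 * xA := by
  have hα₂ : 0 < 1 - α ^ 2 := by nlinarith
  have hsq : (α * xA) ^ 2 < xT ^ 2 := by nlinarith [sq_nonneg yT]
  have hlt : α * xA < xT := (pow_lt_pow_iff_left₀ (by positivity) hxT.le two_ne_zero).mp hsq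
  have hpos : 0 < xT - α ^ 2 * xA := by nlinarith
  refine lt_of_pow_lt_pow_left₀ 2 hpos.le ?_
  rw [mul_pow, sq_sqrt (by positivity)]
  linear_combination h

lemma sqrt_add_lt_sqrt_of_mul_sqrt_lt {α xA xT yT : ℝ} (hα₀ : 0 < α) (hxA : 0 < xA)
    (h : α * √((xA - xT) ^ 2 + yT ^ 2) < xT - α ^ 2 * xA) :
    √((xA - xT) ^ 2 + yT ^ 2) + 2 * α * xA < √((xA + xT) ^ 2 + yT ^ 2) := by
  have hR₂ : √((xA - xT) ^ 2 + yT ^ 2) ^ 2 = (xA - xT) ^ 2 + yT ^ 2 := sq_sqrt (by positivity)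
  rw [lt_sqrt (by positivity)]
  nlinarith [mul_lt_mul_of_pos_left h (by positivity : (0 : ℝ) < 4 * xA)]

theorem stmt12_general (α xA xT yT : ℝ) (hα : α ∈ Set.Ioo (0:ℝ) 1) (hxA : 0 < xA)
    (hxT : 0 < xT)
    (h : xA^2 + yT^2/(1-α^2) - xT^2/α^2 < 0) :
    α < (Real.sqrt ((xA+xT)^2 + yT^2) - Real.sqrt ((xA-xT)^2 + yT^2)) / (2*xA) := by
  obtain ⟨hα₀, hα₁⟩ := hα
  have hpoly := attackerWinRegion_poly hα₀ hα₁ h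
  have hR := sqrt_add_lt_sqrt_of_mul_sqrt_lt hα₀ hxA
    (mul_sqrt_lt_of_attackerWinRegion_poly hα₀ hα₁ hxA hxT hpoly)
  rw [lt_div_iff₀ (by positivity)]
  linarith

/-- in the attacker-win region R_c the normalized distance-difference
exceeds the speed ratio α. -/
theorem stmt12 (α xA xT yT : ℝ) (hα : α ∈ Set.Ioo (0:ℝ) 1) (hxA : 0 < xA)
    (hxT : 0 < xT) (hyT : 0 ≤ yT)
    (h : xA^2 + yT^2/(1-α^2) - xT^2/α^2 < 0) :
    α < (Real.sqrt ((xA+xT)^2 + yT^2) - Real.sqrt ((xA-xT)^2 + yT^2)) / (2*xA) :=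
  stmt12_general α xA xT yT hα hxA hxT h
end

section
/- Define J₂(y) = α·sqrt(x_A² + y²) − sqrt((y − y_T)² + x_T²) for fixed x_A > 0, x_T ≠ 0, y_T ∈ ℝ, and α ∈ (0,1). Then any critical point y of J₂ satisfies the quartic (1−α²)y⁴ − 2(1−α²)y_T y³ + [(1−α²)y_T² + x_A² − α²x_T²]y² − 2x_A²y_T y + x_A²y_T² = 0. -/
/-! At a critical point the two distance terms have equal slopes,
`α y / √(x_A² + y²) = (y - y_T) / √((y - y_T)² + x_T²)`. Clearing the (positive) square roots
and squaring gives `α² y² ((y - y_T)² + x_T²) = (y - y_T)² (x_A² + y²)`, which expands to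
the quartic. -/

open Real

lemma hasDerivAt_sqrt_sub_sq_add {c : ℝ} (hc : 0 < c) (q y : ℝ) :
    HasDerivAt (fun z => √((z - q) ^ 2 + c)) ((y - q) / √((y - q) ^ 2 + c)) y := by
  have hpos : 0 < (y - q) ^ 2 + c := by positivity
  have hinner : HasDerivAt (fun z => (z - q) ^ 2 + c) (2 * (y - q)) y := by
    simpa using (((hasDerivAt_id y).sub_const q).pow 2).add_const c
  convert hinner.sqrt hpos.ne' using 1
  field_simp

lemma sq_mul_eq_sq_mul_of_div_sqrt_eq {a b A B : ℝ} (hA : 0 < A) (hB : 0 < B)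
    (h : a / √A = b / √B) : a ^ 2 * B = b ^ 2 * A := by
  rw [div_eq_div_iff (sqrt_pos.2 hA).ne' (sqrt_pos.2 hB).ne'] at h
  have := congrArg (· ^ 2) h
  simpa only [mul_pow, sq_sqrt hA.le, sq_sqrt hB.le] using this

theorem stmt13_general (α xA xT yT : ℝ) (hxA : 0 < xA) (hxT : xT ≠ 0)
    (J : ℝ → ℝ)
    (hJ : ∀ y, J y = α * Real.sqrt (xA^2 + y^2) - Real.sqrt ((y - yT)^2 + xT^2))
    (y : ℝ) (hcrit : HasDerivAt J 0 y) :
    (1-α^2)*y^4 - 2*(1-α^2)*yT*y^3 + ((1-α^2)*yT^2 + xA^2 - α^2*xT^2)*y^2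
      - 2*xA^2*yT*y + xA^2*yT^2 = 0 := by
  have hJ' : J = fun z => α * √((z - 0) ^ 2 + xA ^ 2) - √((z - yT) ^ 2 + xT ^ 2) := by
    funext z
    rw [hJ, sub_zero, add_comm (z ^ 2)]
  have hderiv := ((hasDerivAt_sqrt_sub_sq_add (c := xA ^ 2) (by positivity) 0 y).const_mul α).sub
    (hasDerivAt_sqrt_sub_sq_add (c := xT ^ 2) (by positivity) yT y)
  rw [hJ'] at hcrit
  have hslopes : α * y / √(y ^ 2 + xA ^ 2) = (y - yT) / √((y - yT) ^ 2 + xT ^ 2) := by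
    simpa only [sub_zero, mul_div_assoc, sub_eq_zero] using hderiv.unique hcrit
  have key := sq_mul_eq_sq_mul_of_div_sqrt_eq (by positivity) (by positivity) hslopes
  linear_combination -key

/-- any critical point of J₂(y) = α·sqrt(x_A²+y²) − sqrt((y−y_T)²+x_T²)
satisfies the ATDDG aimpoint quartic. -/
theorem stmt13 (α xA xT yT : ℝ) (hα : α ∈ Set.Ioo (0:ℝ) 1) (hxA : 0 < xA) (hxT : xT ≠ 0)
    (J : ℝ → ℝ)
    (hJ : ∀ y, J y = α * Real.sqrt (xA^2 + y^2) - Real.sqrt ((y - yT)^2 + xT^2))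
    (y : ℝ) (hcrit : HasDerivAt J 0 y) :
    (1-α^2)*y^4 - 2*(1-α^2)*yT*y^3 + ((1-α^2)*yT^2 + xA^2 - α^2*xT^2)*y^2
      - 2*xA^2*yT*y + xA^2*yT^2 = 0 :=
  stmt13_general α xA xT yT hxA hxT J hJ y hcrit
end
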